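/- arXiv:2510.04613 — 3 statements merged into one kernel-verified Lean document; each statement's English description precedes it below -/
import Mathlib

section
/- Let $s_i\in(2/3,1)$ for $i\in\{2,4,5,7,8,9\}$ with $s_7\leq s_8$, $s_4\leq s_5$, and $s_2\leq s_9$, and $a>0$. Consider the affine maps on $\mathbb{R}$: $g_2(y)=\frac{y}{3s_2}-\frac{2a}{\sqrt3 s_2}$, $g_5(y)=\frac{y}{3s_5}+\frac{a}{\sqrt3 s_5}$, $g_8(y)=-\frac{y}{3s_8}+\frac{a}{\sqrt3 s_8}$, $g_9(y)=-\frac{y}{3s_9}-\frac{2a}{\sqrt3 s_9}$. Let $P_2=\mathrm{Fix}(g_2)=\frac{-6a}{\sqrt3(3s_2-1)}$ and $P_5=\mathrm{Fix}(g_5)=\frac{3a}{\sqrt3(3s_5-1)}$. Then: (i) $0>g_9(P_2)>P_2$; (ii) $0>g_9(P_5)>P_2$; (iii) $0>g_9(g_8(P_2))>P_2$; (iv) $g_8(g_8(P_2))>P_2$ and $0<g_8(P_5)<\min\{g_8(P_2),P_5\}$. -/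
set_option maxHeartbeats 1600000

theorem stmt4 (a s2 s4 s5 s7 s8 s9 : ℝ) (ha : 0 < a)
    (h2 : s2 ∈ Set.Ioo (2/3 : ℝ) 1) (h4 : s4 ∈ Set.Ioo (2/3 : ℝ) 1)
    (h5 : s5 ∈ Set.Ioo (2/3 : ℝ) 1) (h7 : s7 ∈ Set.Ioo (2/3 : ℝ) 1)
    (h8 : s8 ∈ Set.Ioo (2/3 : ℝ) 1) (h9 : s9 ∈ Set.Ioo (2/3 : ℝ) 1)
    (h78 : s7 ≤ s8) (h45 : s4 ≤ s5) (h29 : s2 ≤ s9)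
    (g2 g5 g8 g9 : ℝ → ℝ)
    (hg2 : ∀ y, g2 y = y / (3*s2) - 2*a / (Real.sqrt 3 * s2))
    (hg5 : ∀ y, g5 y = y / (3*s5) + a / (Real.sqrt 3 * s5))
    (hg8 : ∀ y, g8 y = -y / (3*s8) + a / (Real.sqrt 3 * s8))
    (hg9 : ∀ y, g9 y = -y / (3*s9) - 2*a / (Real.sqrt 3 * s9))
    (P2 P5 : ℝ)
    (hP2 : P2 = -6*a / (Real.sqrt 3 * (3*s2 - 1)))
    (hP5 : P5 = 3*a / (Real.sqrt 3 * (3*s5 - 1))) :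
    (0 > g9 P2 ∧ g9 P2 > P2) ∧
    (0 > g9 P5 ∧ g9 P5 > P2) ∧
    (0 > g9 (g8 P2) ∧ g9 (g8 P2) > P2) ∧
    (g8 (g8 P2) > P2 ∧ 0 < g8 P5 ∧ g8 P5 < min (g8 P2) P5) := by
  obtain ⟨h2l, h2r⟩ := h2
  obtain ⟨h5l, h5r⟩ := h5
  obtain ⟨h8l, h8r⟩ := h8
  obtain ⟨h9l, h9r⟩ := h9
  have hr : (0:ℝ) < Real.sqrt 3 := Real.sqrt_pos.mpr (by norm_num)
  obtain ⟨c, hc, rfl⟩ : ∃ c, 0 < c ∧ a = Real.sqrt 3 * c :=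
    ⟨a / Real.sqrt 3, div_pos ha hr, by field_simp⟩
  have hs2 : (0:ℝ) < s2 := by linarith
  have hs5 : (0:ℝ) < s5 := by linarith
  have hs8 : (0:ℝ) < s8 := by linarith
  have hs9 : (0:ℝ) < s9 := by linarith
  have hA : (0:ℝ) < 3*s2 - 1 := by linarith
  have hB : (0:ℝ) < 3*s5 - 1 := by linarith
  have hAne : (3*s2 - 1) ≠ 0 := ne_of_gt hA
  have hBne : (3*s5 - 1) ≠ 0 := ne_of_gt hB
  have hrne : Real.sqrt 3 ≠ 0 := ne_of_gt hr
  have key3 : P2 = -(6*c) / (3*s2 - 1) := by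
    rw [hP2]; rw [div_eq_div_iff (by positivity) hAne]; ring
  have key5 : P5 = 3*c / (3*s5 - 1) := by
    rw [hP5]; rw [div_eq_div_iff (by positivity) hBne]; ring
  have E1 : g9 P2 = -(2*c*(3*s2-2)) / (s9*(3*s2-1)) := by
    rw [hg9, key3]; field_simp; ring
  have E2 : g9 P5 = -(c*(6*s5-1)) / (s9*(3*s5-1)) := by
    rw [hg9, key5]; field_simp; ring
  have E3 : g8 P2 = c*(3*s2+1) / (s8*(3*s2-1)) := by
    rw [hg8, key3]; field_simp; ring
  have E4 : g9 (g8 P2) = -(c*((3*s2+1) + 6*s8*(3*s2-1))) / (3*s8*(3*s2-1)*s9) := by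
    rw [hg9, E3]; field_simp; ring
  have E5 : g8 (g8 P2) = c*(3*s8*(3*s2-1) - (3*s2+1) + 0) / (3*s8^2*(3*s2-1)) := by
    rw [hg8, E3]; field_simp; ring
  have E6 : g8 P5 = c*(3*s5-2) / (s8*(3*s5-1)) := by
    rw [hg8, key5]; field_simp; ring
  refine ⟨⟨?_, ?_⟩, ⟨?_, ?_⟩, ⟨?_, ?_⟩, ?_, ?_, lt_min ?_ ?_⟩
  · rw [E1]
    apply div_neg_of_neg_of_pos (by nlinarith) (by positivity)
  · rw [gt_iff_lt, ← sub_pos]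
    have h : g9 P2 - P2 = 2*c*(3*s9 - 3*s2 + 2) / (s9*(3*s2-1)) := by
      rw [E1, key3]; field_simp; ring
    rw [h]
    apply div_pos (by nlinarith) (by positivity)
  · rw [E2]
    apply div_neg_of_neg_of_pos (by nlinarith) (by positivity)
  · rw [gt_iff_lt, ← sub_pos]
    have h : g9 P5 - P2 = c*(6*s9*(3*s5-1) - (3*s2-1)*(6*s5-1)) / ((3*s2-1)*s9*(3*s5-1)) := by
      rw [E2, key3, div_sub_div _ _ (mul_ne_zero hs9.ne' hBne) hAne, div_eq_div_iff (mul_ne_zero (mul_ne_zero hs9.ne' hBne) hAne) (mul_ne_zero (mul_ne_zero hAne hs9.ne') hBne)]; ring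
    rw [h]
    have hkey : (0:ℝ) ≤ (s9 - s2) * (6*s5 - 1) :=
      mul_nonneg (by linarith) (by linarith)
    exact div_pos (mul_pos hc (by nlinarith [hkey])) (by positivity)
  · rw [E4]
    have hpos : 0 < c*((3*s2+1) + 6*s8*(3*s2-1)) :=
      mul_pos hc (by nlinarith [mul_pos hs8 hA])
    exact div_neg_of_neg_of_pos (by linarith) (by positivity)
  · rw [gt_iff_lt, ← sub_pos]
    have h : g9 (g8 P2) - P2 =
        c*(18*s8*s9 - (3*s2+1) - 6*s8*(3*s2-1)) / (3*s8*(3*s2-1)*s9) := by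
      rw [E4, key3]; field_simp; ring
    rw [h]
    have hkey : (0:ℝ) ≤ (s9 - s2) * s8 := mul_nonneg (by linarith) hs8.le
    exact div_pos (mul_pos hc (by nlinarith [hkey])) (by positivity)
  · rw [gt_iff_lt, ← sub_pos]
    have h : g8 (g8 P2) - P2 =
        c*(3*s8*(3*s2-1) - (3*s2+1) + 18*s8^2) / (3*s8^2*(3*s2-1)) := by
      rw [E5, key3]; field_simp; ring
    rw [h]
    exact div_pos (mul_pos hc (by nlinarith [mul_pos hs8 hA, sq_nonneg (s8 - 2/3)])) (by positivity)
  · rw [E6]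
    apply div_pos (by nlinarith) (by positivity)
  · rw [← sub_pos]
    have h : g8 P2 - g8 P5 =
        c*((3*s5-1)*(3*s2+1) - (3*s2-1)*(3*s5-2)) / (s8*(3*s2-1)*(3*s5-1)) := by
      rw [E3, E6]; field_simp
    rw [h]
    apply div_pos (by nlinarith) (by positivity)
  · rw [← sub_pos]
    have h : P5 - g8 P5 = c*(3*s8 - (3*s5-2)) / (s8*(3*s5-1)) := by
      rw [E6, key5]; field_simp
    rw [h]
    apply div_pos (by nlinarith) (by positivity)
end

section
/- Let $s\in(1/3,1)$. Then $\frac{-\frac59\log\frac59-\frac49\log\frac29}{\log(3s)}>\frac{\log(1/s)}{\log 3}$ and $\frac{\log(1/s)}{\log 3}\in(0,1)$. -/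
theorem stmt9 (s : ℝ) (hs : s ∈ Set.Ioo (1/3 : ℝ) 1) :
    ((-(5/9 : ℝ) * Real.log (5/9) - (4/9) * Real.log (2/9)) / Real.log (3*s)
      > Real.log (1/s) / Real.log 3) ∧
    Real.log (1/s) / Real.log 3 ∈ Set.Ioo (0:ℝ) 1 := by
  obtain ⟨hs1, hs2⟩ := hs
  have hspos : (0:ℝ) < s := by linarith
  have hl3 : 0 < Real.log 3 := Real.log_pos (by norm_num)
  have hl3u : Real.log 3 ≤ 2 := by
    have := Real.log_le_sub_one_of_pos (show (0:ℝ) < 3 by norm_num)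
    linarith
  have hls : Real.log s < 0 := Real.log_neg hspos hs2
  have hlsl : -Real.log 3 < Real.log s := by
    have h := Real.log_lt_log (show (0:ℝ) < 1/3 by norm_num) hs1
    rw [one_div, Real.log_inv] at h
    linarith
  have h3s : Real.log (3*s) = Real.log 3 + Real.log s :=
    Real.log_mul (by norm_num) (ne_of_gt hspos)
  have hinv : Real.log (1/s) = -Real.log s := by rw [one_div, Real.log_inv]
  have hLa : Real.log (5/9 : ℝ) ≤ -4/9 := by
    have := Real.log_le_sub_one_of_pos (show (0:ℝ) < 5/9 by norm_num)
    linarith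
  have hLb : Real.log (2/9 : ℝ) ≤ -7/9 := by
    have := Real.log_le_sub_one_of_pos (show (0:ℝ) < 2/9 by norm_num)
    linarith
  have hL : (48/81 : ℝ) ≤ -(5/9 : ℝ) * Real.log (5/9) - (4/9) * Real.log (2/9) := by
    nlinarith
  have h3spos : 0 < Real.log 3 + Real.log s := by linarith
  constructor
  · rw [h3s, hinv, gt_iff_lt, div_lt_div_iff₀ hl3 h3spos]
    nlinarith [sq_nonneg (Real.log 3 + 2 * Real.log s), mul_le_mul_of_nonneg_right hl3u hl3.le]
  · rw [hinv]
    constructor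
    · exact div_pos (by linarith) hl3
    · rw [div_lt_one hl3]; linarith
end

section
/- Let $X_n$ be the Markov chain on the 12-element group $\mathcal{G}=\langle Q_1,Q_2,Q_3,Q_4\rangle$ with transitions: from $g$, move to $gQ_k$ with probability $1/4$ for each $k\in\{1,2,3,4\}$. Then $\mathbb{P}(X_{2n}=I\mid X_0=I)=\frac{\#\{\tau\in\{1,2,3,4\}^{2n}:Q_\tau=I\}}{4^{2n}}\to\frac{1}{6}$ as $n\to\infty$. Consequently there exists $N_0$ such that $\#\{\tau\in\{1,2,3,4\}^{2n}:Q_\tau=I\}\geq\frac{4^{2n}}{12}$ for all $n\geq N_0$. -/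
noncomputable section

open Matrix Filter

def mQ : Fin 4 → Matrix (Fin 2) (Fin 2) ℝ
  | 0 => !![1/2, Real.sqrt 3 / 2; Real.sqrt 3 / 2, -1/2]
  | 1 => !![1/2, -(Real.sqrt 3) / 2; -(Real.sqrt 3) / 2, -1/2]
  | 2 => !![-1, 0; 0, 1]
  | 3 => !![-1, 0; 0, -1]

def mQword {n : ℕ} (τ : Fin n → Fin 4) : Matrix (Fin 2) (Fin 2) ℝ :=
  (List.ofFn fun i => mQ (τ i)).prod

namespace Stmt14Aux

abbrev Z3 := Zsqrtd 3
def s3 : Z3 := ⟨0,1⟩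

def nQ : Fin 4 → Matrix (Fin 2) (Fin 2) Z3
  | 0 => !![1, s3; s3, -1]
  | 1 => !![1, -s3; -s3, -1]
  | 2 => !![-2, 0; 0, 2]
  | 3 => !![-2, 0; 0, -2]

def NN : Fin 12 → Matrix (Fin 2) (Fin 2) Z3 :=
  ![!![2,0;0,2], !![1,s3;s3,-1], !![1,-s3;-s3,-1], !![-2,0;0,2],
    !![-2,0;0,-2], !![-1,-s3;s3,-1], !![-1,s3;-s3,-1], !![-1,-s3;-s3,1],
    !![-1,s3;s3,1], !![2,0;0,-2], !![1,s3;-s3,1], !![1,-s3;s3,1]]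

def step : Fin 12 → Fin 4 → Fin 12 :=
  ![![1,2,3,4], ![0,5,6,7], ![6,0,5,8], ![5,6,0,9], ![7,8,9,0], ![3,1,2,10],
    ![2,3,1,11], ![4,10,11,1], ![11,4,10,2], ![10,11,4,3], ![9,7,8,5], ![8,9,7,6]]

theorem hstepZ : ∀ g k, NN g * nQ k = (2:Z3) • NN (step g k) := by decide
theorem hNinj : ∀ g h : Fin 12, NN g = NN h → g = h := by decide
theorem hN0 : NN 0 = (2:Z3) • 1 := by decide
theorem hback : ∀ g k, step (step g k) k = g := by decide

def φ : Z3 →+* ℝ := Zsqrtd.toReal (by norm_num)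

theorem φinj : Function.Injective φ := by
  apply Zsqrtd.toReal_injective
  intro n h
  have h1 : -2 ≤ n := by nlinarith
  have h2 : n ≤ 2 := by nlinarith
  interval_cases n <;> omega

theorem hmapQ : ∀ k, (nQ k).map φ = (2:ℝ) • mQ k := by
  intro k
  fin_cases k <;> (ext i j; fin_cases i <;> fin_cases j) <;>
    simp [nQ, mQ, φ, s3, Matrix.map_apply, Zsqrtd.toReal_apply] <;> ring

theorem hmapsmul (c : Z3) (A : Matrix (Fin 2) (Fin 2) Z3) :
    (c • A).map φ = (φ c) • A.map φ := by
  ext i j; simp [Matrix.map_apply, Matrix.smul_apply, smul_eq_mul, _root_.map_mul]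

def Mg : Fin 12 → Matrix (Fin 2) (Fin 2) ℝ := fun g => (1/2 : ℝ) • (NN g).map φ

theorem Mg0 : Mg 0 = 1 := by
  rw [Mg, hN0, hmapsmul]
  have h2 : φ 2 = 2 := map_ofNat φ 2
  rw [h2, Matrix.map_one φ (map_zero φ) (map_one φ)]
  rw [smul_smul]; norm_num

theorem MgStep : ∀ g k, Mg g * mQ k = Mg (step g k) := by
  intro g k
  have hq : mQ k = (1/2 : ℝ) • (nQ k).map φ := by
    rw [hmapQ, smul_smul]; norm_num
  rw [Mg, hq, Matrix.smul_mul, Matrix.mul_smul, smul_smul, ← Matrix.map_mul, hstepZ,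
    hmapsmul]
  have h2 : φ 2 = 2 := map_ofNat φ 2
  rw [h2, Mg, smul_smul]
  norm_num

theorem MgInj : Function.Injective Mg := by
  intro g h hgh
  apply hNinj
  have h2 : (NN g).map φ = (NN h).map φ := by
    have := congrArg (fun A => (2:ℝ) • A) hgh
    simpa [Mg, smul_smul] using this
  refine Matrix.ext fun i j => φinj ?_
  have := congrFun (congrFun h2 i) j
  simpa [Matrix.map_apply] using this

theorem mQinv : ∀ k, mQ k * mQ k = 1 := by
  intro k
  have hz : nQ k * nQ k = (4:Z3) • 1 := by revert k; decide
  have h1 : ((nQ k) * (nQ k)).map φ = ((4:Z3) • (1 : Matrix (Fin 2) (Fin 2) Z3)).map φ := by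
    rw [hz]
  rw [Matrix.map_mul, hmapQ, hmapsmul, Matrix.map_one φ (map_zero φ) (map_one φ)] at h1
  have h4 : φ 4 = 4 := map_ofNat φ 4
  rw [h4] at h1
  have h2 : (4:ℝ) • (mQ k * mQ k) = (4:ℝ) • (1 : Matrix (Fin 2) (Fin 2) ℝ) := by
    rw [← h1, Matrix.smul_mul, Matrix.mul_smul, smul_smul]; norm_num
  have := smul_right_injective (Matrix (Fin 2) (Fin 2) ℝ) (by norm_num : (4:ℝ) ≠ 0)
  exact this h2

theorem word_zero (τ : Fin 0 → Fin 4) : mQword τ = 1 := by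
  simp [mQword]

theorem word_snoc {m : ℕ} (τ : Fin (m+1) → Fin 4) :
    mQword τ = mQword (fun i : Fin m => τ i.castSucc) * mQ (τ (Fin.last m)) := by
  rw [mQword, List.ofFn_succ', List.prod_concat]; rfl

def cnt (m : ℕ) (g : Fin 12) : ℕ := Nat.card {τ : Fin m → Fin 4 // mQword τ = Mg g}

theorem cnt_zero (g : Fin 12) : cnt 0 g = if g = 0 then 1 else 0 := by
  rw [cnt]
  split_ifs with h
  · subst h
    rw [Mg0]
    have : ∀ τ : Fin 0 → Fin 4, mQword τ = 1 := word_zero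
    rw [Nat.card_congr (Equiv.subtypeUnivEquiv this)]
    simp [Nat.card_unique]
  · have : IsEmpty {τ : Fin 0 → Fin 4 // mQword τ = Mg g} := by
      constructor
      rintro ⟨τ, hτ⟩
      rw [word_zero, ← Mg0] at hτ
      exact h (MgInj hτ.symm)
    exact Nat.card_of_isEmpty

theorem cond_iff {m : ℕ} (g : Fin 12) (k : Fin 4) (σ : Fin m → Fin 4) :
    mQword σ * mQ k = Mg g ↔ mQword σ = Mg (step g k) := by
  constructor
  · intro h
    have := congrArg (fun A => A * mQ k) h
    simpa [Matrix.mul_assoc, mQinv, MgStep] using this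
  · intro h
    rw [h, MgStep, hback]

theorem cnt_succ (m : ℕ) (g : Fin 12) :
    cnt (m+1) g = ∑ k : Fin 4, cnt m (step g k) := by
  have E : {τ : Fin (m+1) → Fin 4 // mQword τ = Mg g} ≃
      Σ k : Fin 4, {σ : Fin m → Fin 4 // mQword σ = Mg (step g k)} := by
    refine
      { toFun := fun τ => ⟨τ.1 (Fin.last m), ⟨fun i => τ.1 i.castSucc, ?_⟩⟩
        invFun := fun p => ⟨Fin.snoc p.2.1 p.1, ?_⟩
        left_inv := ?_
        right_inv := ?_ }
    · rw [← cond_iff g (τ.1 (Fin.last m)), ← word_snoc]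
      exact τ.2
    · rw [word_snoc]
      simp only [Fin.snoc_last, Fin.snoc_castSucc]
      rw [cond_iff]
      exact p.2.2
    · rintro ⟨τ, hτ⟩
      apply Subtype.ext
      exact Fin.snoc_init_self τ
    · rintro ⟨k, σ, hσ⟩
      refine Sigma.subtype_ext ?_ ?_ <;> simp
  letI : ∀ k : Fin 4, Fintype {σ : Fin m → Fin 4 // mQword σ = Mg (step g k)} :=
    fun k => Fintype.ofFinite _
  rw [cnt, Nat.card_congr E, Nat.card_eq_fintype_card, Fintype.card_sigma]
  refine Finset.sum_congr rfl fun k _ => ?_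
  rw [cnt, Nat.card_eq_fintype_card]

def coef : Fin 12 → Fin 6 → ℤ :=
  ![![1,1,1,1,4,4], ![1,-1,-1,1,0,0], ![1,-1,-1,1,0,0], ![1,-1,-1,1,0,0],
    ![1,1,-1,-1,-4,4], ![1,1,1,1,-2,-2], ![1,1,1,1,-2,-2], ![1,-1,1,-1,0,0],
    ![1,-1,1,-1,0,0], ![1,-1,1,-1,0,0], ![1,1,-1,-1,2,-2], ![1,1,-1,-1,2,-2]]

def lam : Fin 6 → ℤ := ![4,-2,-4,2,-1,1]

theorem heig : ∀ (g : Fin 12) (j : Fin 6),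
    (∑ k : Fin 4, coef (step g k) j) = lam j * coef g j := by decide

def F (m : ℕ) (g : Fin 12) : ℤ := ∑ j : Fin 6, coef g j * lam j ^ m

theorem hF0 : ∀ g : Fin 12, F 0 g = if g = 0 then 12 else 0 := by decide

theorem main_formula : ∀ (m : ℕ) (g : Fin 12), (12 : ℤ) * cnt m g = F m g := by
  intro m
  induction m with
  | zero =>
    intro g
    rw [cnt_zero, hF0]
    split_ifs <;> simp
  | succ m ih =>
    intro g
    rw [cnt_succ]
    push_cast
    rw [Finset.mul_sum]
    calc (∑ k : Fin 4, (12:ℤ) * cnt m (step g k))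
        = ∑ k : Fin 4, F m (step g k) := by
          refine Finset.sum_congr rfl fun k _ => ih (step g k)
      _ = ∑ k : Fin 4, ∑ j : Fin 6, coef (step g k) j * lam j ^ m := rfl
      _ = ∑ j : Fin 6, (∑ k : Fin 4, coef (step g k) j) * lam j ^ m := by
          rw [Finset.sum_comm]
          exact Finset.sum_congr rfl fun j _ => (Finset.sum_mul _ _ _).symm
      _ = ∑ j : Fin 6, coef g j * lam j ^ (m+1) := by
          refine Finset.sum_congr rfl fun j _ => ?_
          rw [heig, pow_succ]; ring
      _ = F (m+1) g := rfl

theorem count_eval (n : ℕ) :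
    (12 : ℤ) * cnt (2*n) 0 = 2 * 16^n + 2 * 4^n + 8 := by
  rw [main_formula (2*n) 0, F, Fin.sum_univ_six]
  simp only [show coef 0 0 = 1 from rfl, show coef 0 1 = 1 from rfl,
    show coef 0 2 = 1 from rfl, show coef 0 3 = 1 from rfl,
    show coef 0 4 = 4 from rfl, show coef 0 5 = 4 from rfl,
    show lam 0 = 4 from rfl, show lam 1 = -2 from rfl, show lam 2 = -4 from rfl,
    show lam 3 = 2 from rfl, show lam 4 = -1 from rfl, show lam 5 = 1 from rfl]
  rw [pow_mul, pow_mul, pow_mul, pow_mul, pow_mul, pow_mul]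
  norm_num
  ring

theorem cnt_count (n : ℕ) :
    {τ : Fin (2*n) → Fin 4 | mQword τ = 1}.ncard = cnt (2*n) 0 := by
  rw [cnt, Mg0, ← Nat.card_coe_set_eq]
  rfl

theorem count_real (n : ℕ) :
    ({τ : Fin (2*n) → Fin 4 | mQword τ = 1}.ncard : ℝ) =
      (2 * 16^n + 2 * 4^n + 8) / 12 := by
  have h := count_eval n
  have h2 : (12:ℝ) * (cnt (2*n) 0 : ℝ) = 2 * 16^n + 2 * 4^n + 8 := by
    exact_mod_cast congrArg (fun z : ℤ => (z : ℝ)) h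
  rw [cnt_count n]
  linarith

end Stmt14Aux

theorem stmt14 :
    Tendsto (fun n : ℕ =>
        ({τ : Fin (2*n) → Fin 4 | mQword τ = 1}.ncard : ℝ) / 4 ^ (2*n))
      atTop (nhds (1/6)) ∧
    ∃ N0 : ℕ, ∀ n ≥ N0,
      (4:ℝ) ^ (2*n) / 12 ≤ ({τ : Fin (2*n) → Fin 4 | mQword τ = 1}.ncard : ℝ) := by
  have hval := Stmt14Aux.count_real
  constructor
  · have hpt : ∀ n : ℕ,
        ({τ : Fin (2*n) → Fin 4 | mQword τ = 1}.ncard : ℝ) / 4 ^ (2*n) =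
          1/6 + (1/6) * (1/4:ℝ)^n + (2/3) * (1/16:ℝ)^n := by
      intro n
      have ha : (0:ℝ) < 4^n := by positivity
      have h16 : (16:ℝ)^n = 4^n * 4^n := by rw [← mul_pow]; norm_num
      have h4 : (4:ℝ)^(2*n) = 4^n * 4^n := by rw [two_mul, pow_add]
      have hq : (1/4:ℝ)^n = 1/4^n := by rw [div_pow, one_pow]
      have hq16 : (1/16:ℝ)^n = 1/(4^n*4^n) := by rw [div_pow, one_pow, h16]
      rw [hval n, h4, h16, hq, hq16]
      field_simp
      ring
    have hlim : Tendsto (fun n : ℕ => 1/6 + (1/6) * (1/4:ℝ)^n + (2/3) * (1/16:ℝ)^n)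
        atTop (nhds (1/6)) := by
      have l1 : Tendsto (fun n : ℕ => (1/4:ℝ)^n) atTop (nhds 0) :=
        tendsto_pow_atTop_nhds_zero_of_lt_one (by norm_num) (by norm_num)
      have l2 : Tendsto (fun n : ℕ => (1/16:ℝ)^n) atTop (nhds 0) :=
        tendsto_pow_atTop_nhds_zero_of_lt_one (by norm_num) (by norm_num)
      have hc : Tendsto (fun _ : ℕ => (1/6:ℝ)) atTop (nhds (1/6)) := tendsto_const_nhds
      have := (hc.add (l1.const_mul (1/6:ℝ))).add (l2.const_mul (2/3:ℝ))
      simpa using this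
    exact hlim.congr fun n => (hpt n).symm
  · refine ⟨0, fun n _ => ?_⟩
    rw [hval n]
    have h1 : (0:ℝ) < 16^n := by positivity
    have h2 : (0:ℝ) < 4^n := by positivity
    have h4 : (4:ℝ)^(2*n) = 16^n := by rw [pow_mul]; norm_num
    rw [h4]
    gcongr
    linarith

end
end
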